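/- Let Θ ⊆ ℝᵐ be compact and (f_θ)_{θ∈Θ} a family of functions f_θ : [−π,π] → ℝ with δ ≤ f_θ(λ) ≤ Γ for all θ, λ and some 0 < δ ≤ Γ < ∞, such that λ ↦ f_θ(λ) is Lipschitz with constant L uniformly in θ ∈ Θ. Let f : [−π,π] → [0,F] be Lipschitz with constant L. Then there is a constant C depending only on δ, Γ, L, F such that for every n ≥ 2 and every bounded g : [−π,π] → ℝ: sup_{θ∈Θ} |Dₙ(θ,g) − D(θ,f)| ≤ C ( 1/n + sup_{λ∈[−π,π]} |g(λ) − f(λ)| ). -/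

import Mathlib

open Real MeasureTheory

/-- The discrete Whittle contrast. -/
noncomputable def whittleDisc {Θ : Type*} (f : Θ → ℝ → ℝ) (n : ℕ) (g : ℝ → ℝ) (θ : Θ) : ℝ :=
  (1 / (n : ℝ)) * ∑ j ∈ (Finset.Icc (-((n / 2 : ℕ) : ℤ)) ((n / 2 : ℕ) : ℤ)).erase 0,
    (Real.log (f θ (2 * π * (j : ℝ) / (n : ℝ))) +
      g (2 * π * (j : ℝ) / (n : ℝ)) / f θ (2 * π * (j : ℝ) / (n : ℝ)))

/-- The integrated Whittle contrast. -/
noncomputable def whittleCont {Θ : Type*} (f : Θ → ℝ → ℝ) (g : ℝ → ℝ) (θ : Θ) : ℝ :=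
  (1 / (2 * π)) * ∫ x in (-π)..π, (Real.log (f θ x) + g x / f θ x)

/-!
Split `|Dₙ(θ,g) − D(θ,f)| ≤ |Dₙ(θ,g) − Dₙ(θ,f)| + |Dₙ(θ,f) − D(θ,f)|`. Since `f_θ ≥ δ`, the first
term is at most `sup |g − f| / δ`. For the second, the integrand `w = log f_θ + f / f_θ` is
bounded by `|log δ| + |log Γ| + F/δ` and Lipschitz with constant `2L/δ + FL/δ²`. The positive
and the negative Fourier frequencies give right-endpoint Riemann sums of `w` on `[0, λ_{⌊n/2⌋}]`
and of `w(-·)` on the mirror interval, with cells of width `2π/n`, each costing `O(1/n²)`;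
the two uncovered end pieces of `[−π, π]` have length at most `π/n`.
-/

open Finset
open scoped NNReal Interval

theorem abs_mul_sub_integral_le {h : ℝ → ℝ} {K : ℝ≥0} {b d : ℝ} (hd : 0 ≤ d)
    (hlip : LipschitzOnWith K h (Set.Icc b (b + d))) :
    |d * h (b + d) - ∫ x in b..b + d, h x| ≤ K * d ^ 2 := by
  have hbd : b ≤ b + d := by linarith
  have hint : IntervalIntegrable h volume b (b + d) :=
    hlip.continuousOn.intervalIntegrable_of_Icc hbd
  have hconst : d * h (b + d) = ∫ _ in b..b + d, h (b + d) := by simp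
  rw [hconst, ← intervalIntegral.integral_sub intervalIntegrable_const hint]
  have hpt : ∀ x ∈ Ι b (b + d), ‖h (b + d) - h x‖ ≤ K * d := by
    intro x hx
    rw [Set.uIoc_of_le hbd] at hx
    have hx' : x ∈ Set.Icc b (b + d) := Set.Ioc_subset_Icc_self hx
    calc ‖h (b + d) - h x‖ = dist (h (b + d)) (h x) := rfl
      _ ≤ K * dist (b + d) x := hlip.dist_le_mul _ (Set.right_mem_Icc.2 hbd) _ hx'
      _ ≤ K * d := by
        gcongr
        rw [Real.dist_eq, abs_of_nonneg (by linarith [hx.2])]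
        linarith [hx.1]
  calc _ ≤ K * d * |b + d - b| := intervalIntegral.norm_integral_le_of_norm_le_const hpt
    _ = K * d ^ 2 := by rw [add_sub_cancel_left, abs_of_nonneg hd]; ring

theorem abs_riemannSum_sub_integral_le {h : ℝ → ℝ} {K : ℝ≥0} {a d : ℝ} (hd : 0 ≤ d) (m : ℕ)
    (hlip : LipschitzOnWith K h (Set.Icc a (a + m * d))) :
    |d * ∑ i ∈ range m, h (a + (i + 1) * d) - ∫ x in a..a + m * d, h x| ≤ m * K * d ^ 2 := by
  induction m with
  | zero => simp
  | succ m ih =>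
    have hsub : a + m * d ≤ a + (m + 1 : ℕ) * d := by push_cast; nlinarith
    have hlow := hlip.mono (Set.Icc_subset_Icc_right hsub)
    have hcell : LipschitzOnWith K h (Set.Icc (a + m * d) (a + m * d + d)) :=
      hlip.mono (Set.Icc_subset_Icc (by nlinarith [(m.cast_nonneg : (0 : ℝ) ≤ m)])
        (by push_cast; linarith))
    have hsplit : ∫ x in a..a + (m + 1 : ℕ) * d, h x
        = (∫ x in a..a + m * d, h x) + ∫ x in a + m * d..a + m * d + d, h x := by
      rw [intervalIntegral.integral_add_adjacent_intervals
        (hlow.continuousOn.intervalIntegrable_of_Icc (by nlinarith [(m.cast_nonneg : (0 : ℝ) ≤ m)]))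
        (hcell.continuousOn.intervalIntegrable_of_Icc (by linarith))]
      push_cast; ring_nf
    have hlast : a + ((m : ℕ) + 1 : ℝ) * d = a + m * d + d := by ring
    rw [sum_range_succ, hsplit, mul_add, hlast]
    calc _ = |(d * ∑ i ∈ range m, h (a + (i + 1) * d) - ∫ x in a..a + m * d, h x)
          + (d * h (a + m * d + d) - ∫ x in a + m * d..a + m * d + d, h x)| := by ring_nf
      _ ≤ m * K * d ^ 2 + K * d ^ 2 :=
        (abs_add_le _ _).trans (add_le_add (ih hlow) (abs_mul_sub_integral_le hd hcell))
      _ = (m + 1 : ℕ) * K * d ^ 2 := by push_cast; ring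

theorem abs_riemannSum_neg_sub_integral_le {h : ℝ → ℝ} {K : ℝ≥0} {d : ℝ} (hd : 0 ≤ d) (m : ℕ)
    (hlip : LipschitzOnWith K h (Set.Icc (-(m * d)) 0)) :
    |d * ∑ i ∈ range m, h (-((i + 1) * d)) - ∫ x in -(m * d)..0, h x| ≤ m * K * d ^ 2 := by
  have hlip_neg : LipschitzOnWith K (fun x => h (-x)) (Set.Icc 0 (0 + m * d)) :=
    LipschitzOnWith.of_dist_le_mul fun x hx y hy => by
      rw [← dist_neg_neg x y]
      exact hlip.dist_le_mul _ ⟨by linarith [hx.2], by linarith [hx.1]⟩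
        _ ⟨by linarith [hy.2], by linarith [hy.1]⟩
  simpa only [zero_add, intervalIntegral.integral_comp_neg, neg_zero] using
    abs_riemannSum_sub_integral_le hd m hlip_neg

theorem abs_intervalIntegral_le_mul {f : ℝ → ℝ} {a b B : ℝ}
    (hB : ∀ x ∈ Set.uIcc a b, |f x| ≤ B) : |∫ x in a..b, f x| ≤ B * |b - a| := by
  have hB' : ∀ x ∈ Ι a b, ‖f x‖ ≤ B := fun x hx => hB x (Set.uIoc_subset_uIcc hx)
  simpa only [Real.norm_eq_abs] using intervalIntegral.norm_integral_le_of_norm_le_const hB'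

theorem sum_erase_zero_Icc_neg {M : Type*} [AddCommMonoid M] (u : ℤ → M) (m : ℕ) :
    ∑ j ∈ (Icc (-(m : ℤ)) m).erase 0, u j = ∑ i ∈ range m, (u (i + 1) + u (-(i + 1))) := by
  induction m with
  | zero => simp
  | succ m ih =>
    have hset : (Icc (-((m + 1 : ℕ) : ℤ)) (m + 1 : ℕ)).erase 0
        = insert ((m : ℤ) + 1) (insert (-((m : ℤ) + 1)) ((Icc (-(m : ℤ)) m).erase 0)) := by
      ext j; simp only [mem_erase, mem_Icc, mem_insert]; omega
    rw [hset, sum_insert (by simp only [mem_erase, mem_Icc, mem_insert]; omega),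
      sum_insert (by simp only [mem_erase, mem_Icc]; omega), ih, sum_range_succ, ← add_assoc,
      add_comm]

/-- `(1/n) ∑_{j ∈ G(n)} h(λ_{j,n})`; the normalisation is `1/n`, not `1/#G(n)`. -/
noncomputable def fourierMean (n : ℕ) (h : ℝ → ℝ) : ℝ :=
  (1 / (n : ℝ)) * ∑ j ∈ (Finset.Icc (-((n / 2 : ℕ) : ℤ)) ((n / 2 : ℕ) : ℤ)).erase 0,
    h (2 * π * (j : ℝ) / (n : ℝ))

theorem whittleDisc_eq_fourierMean {Θ : Type*} (f : Θ → ℝ → ℝ) (n : ℕ) (g : ℝ → ℝ) (θ : Θ) :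
    whittleDisc f n g θ = fourierMean n (fun x => log (f θ x) + g x / f θ x) :=
  rfl

theorem fourierMean_eq_sum_range (n : ℕ) (h : ℝ → ℝ) :
    fourierMean n h = (1 / (n : ℝ)) * ∑ i ∈ range (n / 2),
      (h ((i + 1) * (2 * π / n)) + h (-((i + 1) * (2 * π / n)))) := by
  rw [fourierMean, sum_erase_zero_Icc_neg]
  congr 1
  refine sum_congr rfl fun i _ => ?_
  push_cast
  ring_nf

/-- The largest positive Fourier frequency `λ_{⌊n/2⌋,n}`. -/
noncomputable def maxFourierFreq (n : ℕ) : ℝ :=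
  ((n / 2 : ℕ) : ℝ) * (2 * π / n)

theorem maxFourierFreq_mem_Icc {n : ℕ} (hn : 0 < n) :
    maxFourierFreq n ∈ Set.Icc (π - π / n) π := by
  have hn' : (0 : ℝ) < n := by exact_mod_cast hn
  have hlow : (n : ℝ) ≤ 2 * ((n / 2 : ℕ) : ℝ) + 1 := by
    exact_mod_cast (by omega : n ≤ 2 * (n / 2) + 1)
  have hup : 2 * ((n / 2 : ℕ) : ℝ) ≤ n := by exact_mod_cast (by omega : 2 * (n / 2) ≤ n)
  constructor
  · rw [maxFourierFreq, sub_le_iff_le_add, mul_div_assoc', ← add_div, le_div_iff₀ hn']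
    nlinarith [pi_pos]
  · rw [maxFourierFreq, mul_div_assoc', div_le_iff₀ hn']
    nlinarith [pi_pos]

theorem natCast_mul_two_pi_div_mem_Icc {n k : ℕ} (hn : 0 < n) (hk : k ≤ n / 2) :
    (k : ℝ) * (2 * π / n) ∈ Set.Icc 0 π := by
  have hk' : (k : ℝ) ≤ (n / 2 : ℕ) := by exact_mod_cast hk
  refine ⟨by positivity, le_trans ?_ (maxFourierFreq_mem_Icc hn).2⟩
  rw [maxFourierFreq]
  gcongr

theorem abs_fourierMean_sub_le {n : ℕ} (hn : 0 < n) {u v : ℝ → ℝ} {ε : ℝ}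
    (huv : ∀ x ∈ Set.Icc (-π) π, |u x - v x| ≤ ε) :
    |fourierMean n u - fourierMean n v| ≤ ε := by
  have hn' : (0 : ℝ) < n := by exact_mod_cast hn
  have hterm : ∀ i ∈ range (n / 2), |(u ((i + 1) * (2 * π / n)) + u (-((i + 1) * (2 * π / n))))
      - (v ((i + 1) * (2 * π / n)) + v (-((i + 1) * (2 * π / n))))| ≤ 2 * ε := by
    intro i hi
    obtain ⟨h0, hπ⟩ : ((i + 1 : ℕ) : ℝ) * (2 * π / n) ∈ Set.Icc 0 π :=
      natCast_mul_two_pi_div_mem_Icc hn (by rw [mem_range] at hi; omega)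
    push_cast at h0 hπ
    calc _ = |(u ((i + 1) * (2 * π / n)) - v ((i + 1) * (2 * π / n)))
          + (u (-((i + 1) * (2 * π / n))) - v (-((i + 1) * (2 * π / n))))| := by ring_nf
      _ ≤ ε + ε := (abs_add_le _ _).trans <| add_le_add
          (huv _ ⟨by linarith, hπ⟩) (huv _ ⟨by linarith, by linarith⟩)
      _ = 2 * ε := by ring
  have hhalf : 2 * ((n / 2 : ℕ) : ℝ) ≤ n := by exact_mod_cast (by omega : 2 * (n / 2) ≤ n)
  have hε : 0 ≤ ε := (abs_nonneg _).trans (huv 0 ⟨by linarith [pi_pos], pi_pos.le⟩)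
  rw [fourierMean_eq_sum_range, fourierMean_eq_sum_range, ← mul_sub, ← sum_sub_distrib, abs_mul,
    abs_of_pos (by positivity)]
  calc _ ≤ 1 / (n : ℝ) * ((n / 2 : ℕ) * (2 * ε)) := by
        gcongr
        refine (abs_sum_le_sum_abs _ _).trans ?_
        simpa using sum_le_card_nsmul _ _ _ hterm
    _ ≤ ε := by
        rw [div_mul_eq_mul_div, one_mul, div_le_iff₀ hn']
        nlinarith

theorem abs_fourierMean_sub_integral_maxFourierFreq_le {n : ℕ} (hn : 0 < n) {h : ℝ → ℝ}
    {K : ℝ≥0} (hlip : LipschitzOnWith K h (Set.Icc (-π) π)) :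
    |fourierMean n h - 1 / (2 * π) * ∫ x in -maxFourierFreq n..maxFourierFreq n, h x|
      ≤ 2 * π * K / n := by
  set d := 2 * π / n with hd_def
  set m := n / 2
  have hmd_le : (m : ℝ) * d ≤ π := (maxFourierFreq_mem_Icc hn).2
  have hd : 0 ≤ d := by positivity
  have hmd : 0 ≤ (m : ℝ) * d := by positivity
  have hpos := abs_riemannSum_sub_integral_le hd m (a := 0)
    (hlip.mono (Set.Icc_subset_Icc (by linarith [pi_pos]) (by linarith)))
  have hneg := abs_riemannSum_neg_sub_integral_le hd m
    (hlip.mono (Set.Icc_subset_Icc (by linarith) (by linarith [pi_pos])))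
  simp only [zero_add] at hpos
  have hsplit : ∫ x in -(m * d)..m * d, h x = (∫ x in -(m * d)..0, h x) + ∫ x in 0..m * d, h x :=
    (intervalIntegral.integral_add_adjacent_intervals
      ((hlip.mono (Set.Icc_subset_Icc (by linarith) (by linarith [pi_pos]))).continuousOn
        |>.intervalIntegrable_of_Icc (by linarith))
      ((hlip.mono (Set.Icc_subset_Icc (by linarith [pi_pos]) hmd_le)).continuousOn
        |>.intervalIntegrable_of_Icc hmd)).symm
  have hmean : fourierMean n h = 1 / (2 * π) * (d * ∑ i ∈ range m, h ((i + 1) * d)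
      + d * ∑ i ∈ range m, h (-((i + 1) * d))) := by
    rw [fourierMean_eq_sum_range, sum_add_distrib, ← mul_add, ← mul_assoc, hd_def]
    congr 1
    field_simp
  have hcells : (m : ℝ) * K * d ^ 2 ≤ π * K * d := by
    calc (m : ℝ) * K * d ^ 2 = m * d * K * d := by ring
      _ ≤ π * K * d := by gcongr
  rw [maxFourierFreq, hmean, hsplit, ← mul_sub, abs_mul, abs_of_pos (by positivity)]
  calc _ = 1 / (2 * π) * |(d * ∑ i ∈ range m, h ((i + 1) * d) - ∫ x in (0 : ℝ)..m * d, h x)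
        + (d * ∑ i ∈ range m, h (-((i + 1) * d)) - ∫ x in -(m * d)..0, h x)| := by ring_nf
    _ ≤ 1 / (2 * π) * (π * K * d + π * K * d) := by
        gcongr
        exact (abs_add_le _ _).trans (add_le_add (hpos.trans hcells) (hneg.trans hcells))
    _ = 2 * π * K / n := by
        rw [hd_def]
        field_simp
        ring

theorem abs_fourierMean_sub_integral_le {n : ℕ} (hn : 0 < n) {h : ℝ → ℝ} {B : ℝ} {K : ℝ≥0}
    (hB : ∀ x ∈ Set.Icc (-π) π, |h x| ≤ B) (hlip : LipschitzOnWith K h (Set.Icc (-π) π)) :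
    |fourierMean n h - 1 / (2 * π) * ∫ x in (-π)..π, h x| ≤ (B + 2 * π * K) / n := by
  set c := maxFourierFreq n
  obtain ⟨hc_low, hc_le⟩ : c ∈ Set.Icc (π - π / n) π := maxFourierFreq_mem_Icc hn
  have hc0 : 0 ≤ c := (natCast_mul_two_pi_div_mem_Icc hn le_rfl).1
  have hint : ∀ a b, a ∈ Set.Icc (-π) π → b ∈ Set.Icc (-π) π → IntervalIntegrable h volume a b :=
    fun a b ha hb => (hlip.continuousOn.mono (Set.uIcc_subset_Icc ha hb)).intervalIntegrable
  have hmπ : -π ∈ Set.Icc (-π) π := ⟨le_rfl, by linarith [pi_pos]⟩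
  have hπ : π ∈ Set.Icc (-π) π := ⟨by linarith [pi_pos], le_rfl⟩
  have hc : c ∈ Set.Icc (-π) π := ⟨by linarith, hc_le⟩
  have hmc : -c ∈ Set.Icc (-π) π := ⟨by linarith, by linarith⟩
  have htails : (∫ x in (-π)..π, h x) - ∫ x in -c..c, h x
      = (∫ x in (-π)..-c, h x) - ∫ x in π..c, h x :=
    intervalIntegral.integral_interval_sub_interval_comm (hint _ _ hmπ hπ) (hint _ _ hmc hc)
      (hint _ _ hmπ hmc)
  have hB0 : 0 ≤ B := (abs_nonneg _).trans (hB 0 ⟨by linarith [pi_pos], pi_pos.le⟩)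
  have hleft : |∫ x in (-π)..-c, h x| ≤ B * (π / n) := by
    refine (abs_intervalIntegral_le_mul fun x hx => hB x (Set.uIcc_subset_Icc hmπ hmc hx)).trans ?_
    rw [abs_of_nonneg (by linarith)]
    gcongr
    linarith
  have hright : |∫ x in π..c, h x| ≤ B * (π / n) := by
    refine (abs_intervalIntegral_le_mul fun x hx => hB x (Set.uIcc_subset_Icc hπ hc hx)).trans ?_
    rw [abs_of_nonpos (by linarith)]
    gcongr
    linarith
  calc _ = |(fourierMean n h - 1 / (2 * π) * ∫ x in -c..c, h x)
        - 1 / (2 * π) * ((∫ x in (-π)..π, h x) - ∫ x in -c..c, h x)| := by ring_nf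
    _ ≤ 2 * π * K / n + 1 / (2 * π) * (B * (π / n) + B * (π / n)) := by
        refine (abs_sub _ _).trans
          (add_le_add (abs_fourierMean_sub_integral_maxFourierFreq_le hn hlip) ?_)
        rw [abs_mul, abs_of_pos (by positivity), htails]
        gcongr
        exact (abs_sub _ _).trans (add_le_add hleft hright)
    _ = (B + 2 * π * K) / n := by
        field_simp
        ring

theorem abs_log_sub_log_le {δ a b : ℝ} (hδ : 0 < δ) (ha : δ ≤ a) (hb : δ ≤ b) :
    |log a - log b| ≤ |a - b| / δ := by
  wlog hab : b ≤ a generalizing a b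
  · rw [abs_sub_comm, abs_sub_comm a]
    exact this hb ha (le_of_not_ge hab)
  have hb0 : 0 < b := hδ.trans_le hb
  rw [abs_of_nonneg (sub_nonneg.2 (log_le_log hb0 hab)), abs_of_nonneg (sub_nonneg.2 hab),
    ← log_div (by linarith) hb0.ne']
  calc log (a / b) ≤ a / b - 1 := log_le_sub_one_of_pos (div_pos (hb0.trans_le hab) hb0)
    _ = (a - b) / b := by field_simp
    _ ≤ (a - b) / δ := div_le_div_of_nonneg_left (by linarith) hδ hb

theorem abs_log_add_div_le {δ Γ F a b : ℝ} (hδ : 0 < δ) (ha : δ ≤ a) (ha' : a ≤ Γ) (hb : 0 ≤ b)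
    (hb' : b ≤ F) : |log a + b / a| ≤ |log δ| + |log Γ| + F / δ := by
  have ha0 : 0 < a := hδ.trans_le ha
  have hlog : |log a| ≤ |log δ| + |log Γ| :=
    (abs_le_max_abs_abs (log_le_log hδ ha) (log_le_log ha0 ha')).trans
      (max_le_add_of_nonneg (abs_nonneg _) (abs_nonneg _))
  have hdiv : |b / a| ≤ F / δ := by
    rw [abs_of_nonneg (div_nonneg hb ha0.le)]
    exact div_le_div₀ (hb.trans hb') hb' hδ ha
  linarith [abs_add_le (log a) (b / a)]

theorem lipschitzOnWith_log_add_div {s : Set ℝ} {u v : ℝ → ℝ} {δ F : ℝ} {L : ℝ≥0} (hδ : 0 < δ)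
    (hu : ∀ x ∈ s, δ ≤ u x) (hv : ∀ x ∈ s, 0 ≤ v x ∧ v x ≤ F)
    (hu_lip : LipschitzOnWith L u s) (hv_lip : LipschitzOnWith L v s) :
    LipschitzOnWith (Real.toNNReal (2 * L / δ + F * L / δ ^ 2))
      (fun x => log (u x) + v x / u x) s := by
  refine LipschitzOnWith.of_dist_le' fun x hx y hy => ?_
  have hux := hu x hx
  have huy := hu y hy
  have hux0 : 0 < u x := hδ.trans_le hux
  have huy0 : 0 < u y := hδ.trans_le huy
  obtain ⟨hv0, hvF⟩ := hv y hy
  have hdu : |u y - u x| ≤ L * |x - y| := by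
    simpa only [Real.dist_eq, abs_sub_comm (u x)] using hu_lip.dist_le_mul x hx y hy
  have hdv : |v x - v y| ≤ L * |x - y| := by
    simpa only [Real.dist_eq] using hv_lip.dist_le_mul x hx y hy
  have hquot : v x / u x - v y / u y = (v x - v y) / u x + v y * (u y - u x) / (u x * u y) := by
    field_simp
    ring
  rw [Real.dist_eq, Real.dist_eq]
  calc |log (u x) + v x / u x - (log (u y) + v y / u y)|
      = |(log (u x) - log (u y)) + ((v x - v y) / u x + v y * (u y - u x) / (u x * u y))| := by
        rw [← hquot]; ring_nf
    _ ≤ |log (u x) - log (u y)| + (|(v x - v y) / u x| + |v y * (u y - u x) / (u x * u y)|) :=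
        (abs_add_le _ _).trans (add_le_add_right (abs_add_le _ _) _)
    _ ≤ L * |x - y| / δ + (L * |x - y| / δ + F * (L * |x - y|) / δ ^ 2) := by
        gcongr ?_ + (?_ + ?_)
        · exact (abs_log_sub_log_le hδ hux huy).trans (by rw [abs_sub_comm]; gcongr)
        · rw [abs_div, abs_of_pos hux0]
          exact div_le_div₀ (by positivity) hdv hδ hux
        · rw [abs_div, abs_mul, abs_of_nonneg hv0, abs_of_pos (mul_pos hux0 huy0), sq]
          exact div_le_div₀ (mul_nonneg (hv0.trans hvF) (by positivity))
            (mul_le_mul hvF hdu (abs_nonneg _) (hv0.trans hvF)) (by positivity)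
            (mul_le_mul hux huy hδ.le hux0.le)
    _ = (2 * L / δ + F * L / δ ^ 2) * |x - y| := by ring

theorem abs_whittleDisc_sub_whittleDisc_le {Θ : Type*} {f : Θ → ℝ → ℝ} {θ : Θ} {n : ℕ}
    (hn : 0 < n) {g g' : ℝ → ℝ} {δ ε : ℝ} (hδ : 0 < δ) (hf : ∀ x ∈ Set.Icc (-π) π, δ ≤ f θ x)
    (hgg' : ∀ x ∈ Set.Icc (-π) π, |g x - g' x| ≤ ε) :
    |whittleDisc f n g θ - whittleDisc f n g' θ| ≤ ε / δ := by
  rw [whittleDisc_eq_fourierMean, whittleDisc_eq_fourierMean]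
  refine abs_fourierMean_sub_le hn fun x hx => ?_
  have hε : 0 ≤ ε := (abs_nonneg _).trans (hgg' x hx)
  rw [add_sub_add_left_eq_sub, ← sub_div, abs_div, abs_of_pos (hδ.trans_le (hf x hx))]
  exact div_le_div₀ hε (hgg' x hx) hδ (hf x hx)

theorem abs_whittleDisc_sub_whittleCont_le {Θ : Type*} {f : Θ → ℝ → ℝ} {θ : Θ} {n : ℕ}
    (hn : 0 < n) {g : ℝ → ℝ} {δ Γ F : ℝ} {L : ℝ≥0} (hδ : 0 < δ)
    (hf : ∀ x ∈ Set.Icc (-π) π, δ ≤ f θ x ∧ f θ x ≤ Γ)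
    (hg : ∀ x ∈ Set.Icc (-π) π, 0 ≤ g x ∧ g x ≤ F)
    (hf_lip : LipschitzOnWith L (f θ) (Set.Icc (-π) π))
    (hg_lip : LipschitzOnWith L g (Set.Icc (-π) π)) :
    |whittleDisc f n g θ - whittleCont f g θ|
      ≤ (|log δ| + |log Γ| + F / δ + 2 * π * (2 * L / δ + F * L / δ ^ 2)) / n := by
  obtain ⟨hg0, hg0F⟩ := hg 0 ⟨by linarith [pi_pos], pi_pos.le⟩
  have hF : 0 ≤ F := hg0.trans hg0F
  have hlip := lipschitzOnWith_log_add_div hδ (fun x hx => (hf x hx).1) hg hf_lip hg_lip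
  rw [← Real.coe_toNNReal (2 * L / δ + F * L / δ ^ 2) (by positivity)]
  exact abs_fourierMean_sub_integral_le hn
    (fun x hx => abs_log_add_div_le hδ (hf x hx).1 (hf x hx).2 (hg x hx).1 (hg x hx).2) hlip

theorem abs_sub_le_iSup {s : Set ℝ} {g g' : ℝ → ℝ} {M F : ℝ} (hg : ∀ x, |g x| ≤ M)
    (hg' : ∀ x ∈ s, |g' x| ≤ F) {x : ℝ} (hx : x ∈ s) :
    |g x - g' x| ≤ ⨆ y : s, |g y - g' y| := by
  refine le_ciSup (f := fun y : s => |g y - g' y|) ⟨M + F, ?_⟩ ⟨x, hx⟩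
  rintro _ ⟨y, rfl⟩
  linarith [abs_sub (g y) (g' y), hg y, hg' y y.2]

theorem stmt_3_general (δ Γ L F : ℝ) (hδ : 0 < δ) (hL : 0 ≤ L) (hF : 0 ≤ F) :
    ∃ C : ℝ, 0 < C ∧
      ∀ (m : ℕ) (Θ : Set (EuclideanSpace ℝ (Fin m))), IsCompact Θ →
      ∀ f : EuclideanSpace ℝ (Fin m) → ℝ → ℝ,
        (∀ θ ∈ Θ, ∀ x ∈ Set.Icc (-π) π, δ ≤ f θ x ∧ f θ x ≤ Γ) →
        (∀ θ ∈ Θ, ∀ x ∈ Set.Icc (-π) π, ∀ y ∈ Set.Icc (-π) π,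
          |f θ x - f θ y| ≤ L * |x - y|) →
      ∀ f₀ : ℝ → ℝ,
        (∀ x ∈ Set.Icc (-π) π, 0 ≤ f₀ x ∧ f₀ x ≤ F) →
        (∀ x ∈ Set.Icc (-π) π, ∀ y ∈ Set.Icc (-π) π, |f₀ x - f₀ y| ≤ L * |x - y|) →
      ∀ n : ℕ, 2 ≤ n →
      ∀ g : ℝ → ℝ, (∃ M, ∀ x, |g x| ≤ M) →
      ∀ θ ∈ Θ,
        |whittleDisc f n g θ - whittleCont f f₀ θ| ≤
          C * (1 / (n : ℝ) + ⨆ x : Set.Icc (-π) π, |g x.1 - f₀ x.1|) := by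
  set K := 2 * L / δ + F * L / δ ^ 2
  set B := |log δ| + |log Γ| + F / δ
  refine ⟨1 / δ + B + 2 * π * K, by positivity, ?_⟩
  intro _ Θ _ f hf hf_lip f₀ hf₀ hf₀_lip n hn g ⟨M, hM⟩ θ hθ
  set S := ⨆ x : Set.Icc (-π) π, |g x.1 - f₀ x.1|
  have hS : ∀ x ∈ Set.Icc (-π) π, |g x - f₀ x| ≤ S := fun x hx =>
    abs_sub_le_iSup hM (fun y hy => abs_le.2 ⟨by linarith [(hf₀ y hy).1], (hf₀ y hy).2⟩) hx
  have hreplace := abs_whittleDisc_sub_whittleDisc_le (n := n) (by omega) hδ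
    (fun x hx => (hf θ hθ x hx).1) hS
  have hriemann := abs_whittleDisc_sub_whittleCont_le (n := n) (L := L.toNNReal) (by omega) hδ
    (hf θ hθ) hf₀
    (LipschitzOnWith.of_dist_le' fun x hx y hy => by
      simpa only [Real.dist_eq] using hf_lip θ hθ x hx y hy)
    (LipschitzOnWith.of_dist_le' fun x hx y hy => by
      simpa only [Real.dist_eq] using hf₀_lip x hx y hy)
  rw [Real.coe_toNNReal _ hL] at hriemann
  have hS0 : 0 ≤ S := Real.iSup_nonneg fun _ => abs_nonneg _
  have hBK : 0 ≤ (B + 2 * π * K) * S := by positivity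
  have hδn : 0 ≤ 1 / δ * (1 / n) := by positivity
  calc _ ≤ |whittleDisc f n g θ - whittleDisc f n f₀ θ|
        + |whittleDisc f n f₀ θ - whittleCont f f₀ θ| := abs_sub_le _ _ _
    _ ≤ S / δ + (B + 2 * π * K) / n := add_le_add hreplace hriemann
    _ ≤ (1 / δ + B + 2 * π * K) * (1 / n + S) := by
        rw [show (1 / δ + B + 2 * π * K) * (1 / n + S)
          = 1 / δ * (1 / n) + S / δ + (B + 2 * π * K) / n + (B + 2 * π * K) * S by ring]
        linarith

/-- Composite uniform approximation bound: a constant `C` depending only on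
`δ, Γ, L, F` such that `sup_θ |Dₙ(θ,g) − D(θ,f₀)| ≤ C (1/n + sup_λ |g(λ) − f₀(λ)|)`. -/
theorem stmt_3 (δ Γ L F : ℝ) (hδ : 0 < δ) (hΓ : δ ≤ Γ) (hL : 0 ≤ L) (hF : 0 ≤ F) :
    ∃ C : ℝ, 0 < C ∧
      ∀ (m : ℕ) (Θ : Set (EuclideanSpace ℝ (Fin m))), IsCompact Θ →
      ∀ f : EuclideanSpace ℝ (Fin m) → ℝ → ℝ,
        (∀ θ ∈ Θ, ∀ x ∈ Set.Icc (-π) π, δ ≤ f θ x ∧ f θ x ≤ Γ) →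
        (∀ θ ∈ Θ, ∀ x ∈ Set.Icc (-π) π, ∀ y ∈ Set.Icc (-π) π,
          |f θ x - f θ y| ≤ L * |x - y|) →
      ∀ f₀ : ℝ → ℝ,
        (∀ x ∈ Set.Icc (-π) π, 0 ≤ f₀ x ∧ f₀ x ≤ F) →
        (∀ x ∈ Set.Icc (-π) π, ∀ y ∈ Set.Icc (-π) π, |f₀ x - f₀ y| ≤ L * |x - y|) →
      ∀ n : ℕ, 2 ≤ n →
      ∀ g : ℝ → ℝ, (∃ M, ∀ x, |g x| ≤ M) →
      ∀ θ ∈ Θ,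
        |whittleDisc f n g θ - whittleCont f f₀ θ| ≤
          C * (1 / (n : ℝ) + ⨆ x : Set.Icc (-π) π, |g x.1 - f₀ x.1|) :=
  stmt_3_general δ Γ L F hδ hL hF
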